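/- Let a, b, c ∈ ℂ with c not a nonpositive integer and Re(a+b−c) ≥ 1. Then the hypergeometric series ∑_{p=0}^∞ (a)^(p)(b)^(p)/((c)^(p) p!) · z^p diverges for every z with |z| = 1 (assuming no term vanishes, i.e., a and b are not nonpositive integers). -/

import Mathlib

/-!
By Gauss's product formula `Γ(s) = lim n^s n! / (s(s+1)⋯(s+n))`, the `n`-th coefficient of the
series times `(a+n)(b+n) n^(c-a-b) / (c+n)` tends to `Γ(c) / (Γ(a)Γ(b)) ≠ 0`. When
`Re(a+b-c) ≥ 1` the second factor stays bounded, so the coefficients, and on `|z| = 1` the terms,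
cannot tend to zero.
-/

open Nat Filter Topology Asymptotics

lemma tendsto_add_div_natCast_atTop (x : ℂ) :
    Tendsto (fun n : ℕ => ((n : ℂ) + x) / n) atTop (𝓝 1) := by
  simpa using (tendsto_natCast_div_add_atTop x).inv₀ one_ne_zero

lemma isBigO_natCast_mul_cpow_one {e : ℂ} (he : e.re ≤ -1) :
    (fun n : ℕ => (n : ℂ) * (n : ℂ) ^ e) =O[atTop] (fun _ => (1 : ℂ)) := by
  refine IsBigO.of_bound 1 ?_
  filter_upwards [eventually_gt_atTop 0] with n hn
  have hn' : (1 : ℝ) ≤ n := by exact_mod_cast hn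
  rw [norm_mul, Complex.norm_natCast, Complex.norm_natCast_cpow_of_pos hn, norm_one, one_mul]
  calc (n : ℝ) * (n : ℝ) ^ e.re ≤ n * (n : ℝ) ^ (-1 : ℝ) := by
        gcongr
    _ = 1 := by rw [Real.rpow_neg_one, mul_inv_cancel₀ (by positivity)]

lemma isBigO_add_mul_add_mul_cpow_div_add_one (a b c : ℂ) {e : ℂ} (he : e.re ≤ -1) :
    (fun n : ℕ => (a + n) * (b + n) * (n : ℂ) ^ e / (c + n)) =O[atTop] (fun _ => (1 : ℂ)) := by
  have hrat : Tendsto (fun n : ℕ => ((n : ℂ) + a) / n * (((n : ℂ) + b) / n) * (n / (n + c)))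
      atTop (𝓝 1) := by
    simpa using ((tendsto_add_div_natCast_atTop a).mul (tendsto_add_div_natCast_atTop b)).mul
      (tendsto_natCast_div_add_atTop c)
  refine ((hrat.isBigO_one ℂ).mul (isBigO_natCast_mul_cpow_one he)).congr' ?_
    (.of_forall fun _ => mul_one 1)
  filter_upwards [eventually_ne_atTop 0] with n hn
  have hn' : (n : ℂ) ≠ 0 := Nat.cast_ne_zero.2 hn
  field_simp
  ring

lemma ascPochhammer_eval_eq_prod_range {R : Type*} [CommSemiring R] (x : R) (n : ℕ) :
    (ascPochhammer R n).eval x = ∏ j ∈ Finset.range n, (x + j) := by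
  induction n with
  | zero => simp
  | succ n ih => rw [ascPochhammer_succ_eval, ih, Finset.prod_range_succ]

lemma Complex.GammaSeq_eq_cpow_mul_factorial_div (s : ℂ) (n : ℕ) :
    GammaSeq s n = (n : ℂ) ^ s * n ! / ((ascPochhammer ℂ n).eval s * (s + n)) := by
  rw [GammaSeq, ← ascPochhammer_succ_eval, ascPochhammer_eval_eq_prod_range]

lemma Complex.GammaSeq_div_GammaSeq_mul_GammaSeq (a b : ℂ) {c : ℂ} (hc : ∀ m : ℕ, c ≠ -m)
    {n : ℕ} (hn : n ≠ 0) :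
    GammaSeq c n / (GammaSeq a n * GammaSeq b n) =
      ordinaryHypergeometricCoefficient a b c n *
        ((a + n) * (b + n) * (n : ℂ) ^ (c - a - b) / (c + n)) := by
  have hn' : (n : ℂ) ≠ 0 := Nat.cast_ne_zero.2 hn
  have hpoch : (ascPochhammer ℂ n).eval c ≠ 0 := by
    rw [Ne, ascPochhammer_eval_eq_zero_iff]
    rintro ⟨k, -, hk⟩
    exact hc k (by rw [hk, neg_neg])
  have hcn : c + n ≠ 0 := fun h => hc n (eq_neg_of_add_eq_zero_left h)
  have hpow : (n : ℂ) ^ c = (n : ℂ) ^ (c - a - b) * (n : ℂ) ^ a * (n : ℂ) ^ b := by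
    rw [← Complex.cpow_add _ _ hn', ← Complex.cpow_add _ _ hn']
    ring_nf
  have hna : (n : ℂ) ^ a ≠ 0 := by simp [hn']
  have hnb : (n : ℂ) ^ b ≠ 0 := by simp [hn']
  simp only [GammaSeq_eq_cpow_mul_factorial_div, ordinaryHypergeometricCoefficient, hpow]
  field_simp

lemma tendsto_ordinaryHypergeometricCoefficient_mul {a b c : ℂ} (ha : ∀ m : ℕ, a ≠ -m)
    (hb : ∀ m : ℕ, b ≠ -m) (hc : ∀ m : ℕ, c ≠ -m) :
    Tendsto (fun n : ℕ => ordinaryHypergeometricCoefficient a b c n *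
        ((a + n) * (b + n) * (n : ℂ) ^ (c - a - b) / (c + n)))
      atTop (𝓝 (Complex.Gamma c / (Complex.Gamma a * Complex.Gamma b))) := by
  refine (((Complex.GammaSeq_tendsto_Gamma c).div ((Complex.GammaSeq_tendsto_Gamma a).mul
    (Complex.GammaSeq_tendsto_Gamma b)) (mul_ne_zero (Complex.Gamma_ne_zero ha)
      (Complex.Gamma_ne_zero hb)))).congr' ?_
  filter_upwards [eventually_ne_atTop 0] with n hn
  exact Complex.GammaSeq_div_GammaSeq_mul_GammaSeq a b hc hn

theorem hypergeometric_diverges_on_circle (a b c : ℂ)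
    (ha : ∀ m : ℕ, a ≠ -(m : ℂ)) (hb : ∀ m : ℕ, b ≠ -(m : ℂ))
    (hc : ∀ m : ℕ, c ≠ -(m : ℂ)) (hre : 1 ≤ (a + b - c).re)
    (z : ℂ) (hz : ‖z‖ = 1) :
    ¬ Tendsto (fun p : ℕ =>
      Polynomial.eval a (ascPochhammer ℂ p) * Polynomial.eval b (ascPochhammer ℂ p) /
        (Polynomial.eval c (ascPochhammer ℂ p) * (p ! : ℂ)) * z ^ p) atTop (nhds 0) := by
  intro h
  have hcoeff : Tendsto (ordinaryHypergeometricCoefficient a b c) atTop (𝓝 0) := by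
    rw [tendsto_zero_iff_norm_tendsto_zero] at h ⊢
    refine h.congr fun p => ?_
    rw [norm_mul, norm_pow, hz, one_pow, mul_one, ordinaryHypergeometricCoefficient]
    congr 1
    ring
  have hre' : (c - a - b).re ≤ -1 := by
    simp only [Complex.sub_re, Complex.add_re] at hre ⊢
    linarith
  have hzero := hcoeff.zero_mul_isBoundedUnder_le
    ((isBigO_one_iff ℂ).1 (isBigO_add_mul_add_mul_cpow_div_add_one a b c hre'))
  exact div_ne_zero (Complex.Gamma_ne_zero hc)
    (mul_ne_zero (Complex.Gamma_ne_zero ha) (Complex.Gamma_ne_zero hb))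
    (tendsto_nhds_unique (tendsto_ordinaryHypergeometricCoefficient_mul ha hb hc) hzero)
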